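/- Let I be a square-free monomial ideal of R = k[x_1,...,x_d] with symbolic powers I^{(n)} = Q_1^n ∩ ... ∩ Q_s^n (Q_j the minimal primes), and let Φ_m : R^{1/m} → R be the R-linear projection onto monomials with exponents divisible by m. Then for every n ≥ 0, m ≥ 1, and 1 ≤ j ≤ m, one has the equality Φ_m((I^{(nm+j)})^{1/m}) = I^{(n+1)}. -/
import Mathlib


open MvPolynomial

/-- The projection `Φ_m : R^{1/m} → R` under the identification `R^{1/m} ≅ R`
(`x_i^{1/m} ↦ x_i`, so that an ideal `J^{1/m}` of `R^{1/m}` is identified with the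
monomial ideal `J` itself): `Φ_m` sends the monomial `x^a` to `x^{a/m}` if `m` divides
every coordinate of `a`, and to `0` otherwise. -/
noncomputable def Phi (k : Type*) [Field k] (d m : ℕ) :
    MvPolynomial (Fin d) k → MvPolynomial (Fin d) k :=
  fun p => ∑ a ∈ p.support,
    if ∀ i, m ∣ a i then
      monomial (Finsupp.mapRange (· / m) (Nat.zero_div m) a) (coeff a p)
    else 0

section Aux

variable {k : Type*} [Field k] {d : ℕ}

/-- The ideal of polynomials all of whose monomials have `F`-degree at least `n`. -/
def Jdeg (F : Finset (Fin d)) (n : ℕ) : Ideal (MvPolynomial (Fin d) k) where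
  carrier := {p | ∀ a ∈ p.support, n ≤ ∑ i ∈ F, a i}
  zero_mem' := by simp
  add_mem' := by
    intro p q hp hq a ha
    rcases Finset.mem_union.mp (MvPolynomial.support_add ha) with h | h
    exacts [hp a h, hq a h]
  smul_mem' := by
    intro c p hp a ha
    have h : a ∈ (c * p).support := by simpa [smul_eq_mul] using ha
    rcases Finset.mem_add.mp (MvPolynomial.support_mul c p h) with ⟨b, _, e, he, rfl⟩
    have hbe := hp e he
    have : ∑ i ∈ F, (b + e) i = ∑ i ∈ F, b i + ∑ i ∈ F, e i := by
      simp [Finsupp.add_apply, Finset.sum_add_distrib]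
    omega

lemma mem_Jdeg {F : Finset (Fin d)} {n : ℕ} {p : MvPolynomial (Fin d) k} :
    p ∈ Jdeg (k := k) F n ↔ ∀ a ∈ p.support, n ≤ ∑ i ∈ F, a i := Iff.rfl

lemma monomial_mem_pow (F : Finset (Fin d)) (n : ℕ) (a : Fin d →₀ ℕ) (c : k)
    (h : n ≤ ∑ i ∈ F, a i) :
    monomial a c ∈ (Ideal.span (X '' (F : Set (Fin d))) :
      Ideal (MvPolynomial (Fin d) k)) ^ n := by
  induction n generalizing a with
  | zero => simp
  | succ n ih =>
    obtain ⟨i, hiF, hi⟩ : ∃ i ∈ F, 1 ≤ a i := by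
      by_contra h'
      push_neg at h'
      have : ∑ i ∈ F, a i = 0 := Finset.sum_eq_zero fun i hi => by
        have := h' i hi; omega
      omega
    set a' : Fin d →₀ ℕ := a - Finsupp.single i 1 with ha'def
    have ha'app : ∀ j', a' j' = a j' - (Finsupp.single i 1 : Fin d →₀ ℕ) j' := by
      intro j'
      rw [ha'def, Finsupp.tsub_apply]
    have ha : a = Finsupp.single i 1 + a' := by
      ext j'
      rw [Finsupp.add_apply, ha'app j']
      by_cases hj : i = j'
      · subst hj; rw [Finsupp.single_eq_same]; omega
      · simp only [Finsupp.single_apply, if_neg hj]; omega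
    have hsum : n ≤ ∑ i' ∈ F, a' i' := by
      have e1 : ∑ i' ∈ F, a' i' = (a i - 1) + ∑ i' ∈ F.erase i, a' i' := by
        rw [← Finset.add_sum_erase F _ hiF, ha'app i]
        simp [Finsupp.single_apply]
      have e2 : ∑ i' ∈ F.erase i, a' i' = ∑ i' ∈ F.erase i, a i' := by
        apply Finset.sum_congr rfl
        intro x hx
        have hxi : i ≠ x := fun h => (Finset.ne_of_mem_erase hx) h.symm
        rw [ha'app x]
        simp [Finsupp.single_apply, hxi]
      have e3 : ∑ i' ∈ F, a i' = a i + ∑ i' ∈ F.erase i, a i' :=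
        (Finset.add_sum_erase F _ hiF).symm
      omega
    rw [ha, ← one_mul c, ← monomial_mul, pow_succ']
    apply Ideal.mul_mem_mul
    · exact Ideal.subset_span ⟨i, hiF, rfl⟩
    · exact ih _ hsum

lemma span_X_le_Jdeg (F : Finset (Fin d)) :
    (Ideal.span (X '' (F : Set (Fin d))) : Ideal (MvPolynomial (Fin d) k)) ≤ Jdeg F 1 := by
  rw [Ideal.span_le]
  rintro _ ⟨i, hiF, rfl⟩
  intro a ha
  rw [MvPolynomial.support_X] at ha
  rw [Finset.mem_singleton] at ha
  subst ha
  have hi' : i ∈ F := hiF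
  have : (Finsupp.single i 1 : Fin d →₀ ℕ) i
      ≤ ∑ i' ∈ F, (Finsupp.single i 1 : Fin d →₀ ℕ) i' :=
    Finset.single_le_sum (fun _ _ => Nat.zero_le _) hi'
  simpa using this

lemma pow_span_le_Jdeg (F : Finset (Fin d)) (n : ℕ) :
    (Ideal.span (X '' (F : Set (Fin d))) : Ideal (MvPolynomial (Fin d) k)) ^ n ≤ Jdeg F n := by
  induction n with
  | zero => intro p _ a _; exact Nat.zero_le _
  | succ n ih =>
    rw [pow_succ]
    refine Ideal.mul_le.mpr fun r hr s hs => ?_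
    intro a ha
    rcases Finset.mem_add.mp (MvPolynomial.support_mul r s ha) with ⟨b, hb, e, he, rfl⟩
    have h1 := ih hr b hb
    have h2 := span_X_le_Jdeg F hs e he
    have : ∑ i ∈ F, (b + e) i = ∑ i ∈ F, b i + ∑ i ∈ F, e i := by
      simp [Finsupp.add_apply, Finset.sum_add_distrib]
    omega

lemma mem_pow_span_X (F : Finset (Fin d)) (n : ℕ) (p : MvPolynomial (Fin d) k) :
    p ∈ (Ideal.span (X '' (F : Set (Fin d))) : Ideal (MvPolynomial (Fin d) k)) ^ n
      ↔ ∀ a ∈ p.support, n ≤ ∑ i ∈ F, a i := by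
  constructor
  · exact fun h => pow_span_le_Jdeg F n h
  · intro h
    rw [p.as_sum]
    exact Ideal.sum_mem _ fun a ha => monomial_mem_pow F n a _ (h a ha)

lemma coeff_Phi {m : ℕ} (hm : 0 < m) (b : Fin d →₀ ℕ) (p : MvPolynomial (Fin d) k) :
    coeff b (Phi k d m p) = coeff (m • b) p := by
  unfold Phi
  rw [MvPolynomial.coeff_sum]
  have key : ∀ a ∈ p.support,
      coeff b (if ∀ i, m ∣ a i then
        monomial (Finsupp.mapRange (· / m) (Nat.zero_div m) a) (coeff a p) else 0)
      = if a = m • b then coeff a p else 0 := by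
    intro a _
    by_cases hab : a = m • b
    · subst hab
      have hdvd : ∀ i, m ∣ (m • b) i := fun i => ⟨b i, by simp [mul_comm]⟩
      have hmr : Finsupp.mapRange (· / m) (Nat.zero_div m) (m • b) = b := by
        ext i
        simp [Finsupp.mapRange_apply, Nat.mul_div_cancel_left _ hm]
      simp [hdvd, hmr, coeff_monomial]
    · rw [if_neg hab]
      by_cases hdvd : ∀ i, m ∣ a i
      · rw [if_pos hdvd, coeff_monomial, if_neg]
        intro hcon
        apply hab
        ext i
        have := congrFun (congrArg (fun f : Fin d →₀ ℕ => (f : Fin d → ℕ)) hcon) i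
        simp only [Finsupp.mapRange_apply] at this
        rw [Finsupp.smul_apply, smul_eq_mul, ← this]
        exact (Nat.mul_div_cancel' (hdvd i)).symm
      · rw [if_neg hdvd, coeff_zero]
  rw [Finset.sum_congr rfl key, Finset.sum_ite_eq' p.support (m • b) (fun a => coeff a p)]
  by_cases hmem : m • b ∈ p.support
  · rw [if_pos hmem]
  · rw [if_neg hmem, eq_comm]
    exact MvPolynomial.notMem_support_iff.mp hmem

end Aux

/-- for a square-free monomial ideal `I` with minimal primes `Q_1,…,Q_s`
and symbolic powers `I^{(n)} = ⋂_j Q_j^n`, for every `n ≥ 0`, `m ≥ 1`, `1 ≤ j ≤ m`,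
one has the equality `Φ_m((I^{(nm+j)})^{1/m}) = I^{(n+1)}`. -/
theorem Phi_symbolic_power_eq (k : Type*) [Field k] (d s : ℕ)
    (F : Fin s → Finset (Fin d))
    (Q : Fin s → Ideal (MvPolynomial (Fin d) k))
    (hQ : ∀ j, Q j = Ideal.span (X '' (F j : Set (Fin d))))
    (I : Ideal (MvPolynomial (Fin d) k)) (hI : I = ⨅ j, Q j)
    (symb : ℕ → Ideal (MvPolynomial (Fin d) k))
    (hsymb : ∀ n : ℕ, symb n = ⨅ j, Q j ^ n)
    (n m j : ℕ) (hm : 1 ≤ m) (hj1 : 1 ≤ j) (hjm : j ≤ m) :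
    Phi k d m '' ((symb (n * m + j) : Ideal (MvPolynomial (Fin d) k)) :
        Set (MvPolynomial (Fin d) k)) =
      ((symb (n + 1) : Ideal (MvPolynomial (Fin d) k)) : Set (MvPolynomial (Fin d) k)) := by
  have hmpos : 0 < m := hm
  have hmem : ∀ (N : ℕ) (p : MvPolynomial (Fin d) k),
      p ∈ symb N ↔ ∀ j', ∀ a ∈ p.support, N ≤ ∑ i ∈ F j', a i := by
    intro N p
    rw [hsymb N, Ideal.mem_iInf]
    constructor
    · intro h j' a ha
      exact (mem_pow_span_X (F j') N p).mp (by rw [← hQ j']; exact h j') a ha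
    · intro h j'
      rw [hQ j']
      exact (mem_pow_span_X (F j') N p).mpr (h j')
  have hsmul_sum : ∀ (b : Fin d →₀ ℕ) (G : Finset (Fin d)),
      ∑ i ∈ G, (m • b) i = m * ∑ i ∈ G, b i := by
    intro b G
    rw [Finset.mul_sum]
    exact Finset.sum_congr rfl fun i _ => by simp [mul_comm]
  ext q
  constructor
  · rintro ⟨p, hp, rfl⟩
    rw [SetLike.mem_coe, hmem]
    intro j' a ha
    have hc : coeff a (Phi k d m p) ≠ 0 := MvPolynomial.mem_support_iff.mp ha
    rw [coeff_Phi hmpos] at hc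
    have hma : m • a ∈ p.support := MvPolynomial.mem_support_iff.mpr hc
    have hge := (hmem _ p).mp hp j' (m • a) hma
    rw [hsmul_sum] at hge
    -- from n*m + j ≤ m * t with 1 ≤ j ≤ m, deduce n + 1 ≤ t
    by_contra hlt
    push_neg at hlt
    have h1 : m * ∑ i ∈ F j', a i ≤ m * n := Nat.mul_le_mul_left m (by omega)
    have h2 : n * m + j ≤ m * n := le_trans hge h1
    have h3 : m * n = n * m := mul_comm m n
    linarith
  · intro hq
    rw [SetLike.mem_coe, hmem] at hq
    set p : MvPolynomial (Fin d) k :=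
      ∑ a ∈ q.support, monomial (m • a) (coeff a q) with hpdef
    have hcoeff : ∀ b : Fin d →₀ ℕ, coeff (m • b) p = coeff b q := by
      intro b
      rw [hpdef, MvPolynomial.coeff_sum]
      have key : ∀ a ∈ q.support,
          coeff (m • b) (monomial (m • a) (coeff a q))
            = if a = b then coeff a q else 0 := by
        intro a _
        rw [coeff_monomial]
        congr 1
        simp only [eq_iff_iff]
        constructor
        · intro h
          ext i
          have := congrFun (congrArg (fun f : Fin d →₀ ℕ => (f : Fin d → ℕ)) h) i
          simp only [Finsupp.smul_apply, smul_eq_mul] at this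
          exact Nat.eq_of_mul_eq_mul_left hmpos this
        · rintro rfl; rfl
      rw [Finset.sum_congr rfl key, Finset.sum_ite_eq' q.support b (fun a => coeff a q)]
      by_cases hmem' : b ∈ q.support
      · rw [if_pos hmem']
      · rw [if_neg hmem', eq_comm]
        exact MvPolynomial.notMem_support_iff.mp hmem'
    refine ⟨p, ?_, ?_⟩
    · rw [SetLike.mem_coe, hmem]
      intro j' a ha
      have hsub : p.support ⊆ q.support.biUnion
          fun a => (monomial (m • a) (coeff a q)).support := by
        rw [hpdef]; exact MvPolynomial.support_sum
      rcases Finset.mem_biUnion.mp (hsub ha) with ⟨b, hb, hab⟩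
      have : a = m • b := Finset.mem_singleton.mp (MvPolynomial.support_monomial_subset hab)
      subst this
      rw [hsmul_sum]
      have hb' := hq j' b hb
      have he : m * (n + 1) = n * m + m := by ring
      calc n * m + j ≤ m * (n + 1) := by rw [he]; omega
        _ ≤ m * ∑ i ∈ F j', b i := Nat.mul_le_mul_left m hb'
    · ext b
      rw [coeff_Phi hmpos, hcoeff]
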